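/- arXiv:1809.05322 — 2 statements merged into one kernel-verified Lean document; each statement's English description precedes it below -/
import Mathlib

section
/- Let 0 < θ̄ < π/2 and l₀ > 0, and set κ₀ = 2 sin(θ̄)/l₀. Define the cone K = {x ∈ ℝ² : |x₂| ≤ x₁ · tan(θ̄)}, the region P₀ = {x ∈ ℝ² : ‖x‖ ≤ l₀} ∩ K, and the arc Q₀ = {x ∈ ℝ² : ‖x‖ = l₀} ∩ K. Let τ : ℝ → ℝ² be twice continuously differentiable on [0,1] with τ(0) = (0,0), τ'(0) = (1,0), ‖τ'(s)‖ = 1 for all s ∈ [0,1] (unit-speed parametrization), curvature bound ‖τ''(s)‖ ≤ κ₀ for all s ∈ [0,1], and τ(1) ∉ P₀. Then there exists s₀ ∈ [0,1] such that τ(s₀) ∈ Q₀ and τ(s) ∈ P₀ for all s ∈ [0, s₀]. -/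
open Real Set

/-- The cone with apex at the origin, axis the positive `x`-axis
and half-aperture `θ`. -/
def irrCone (θ : ℝ) : Set (EuclideanSpace ℝ (Fin 2)) :=
  {x | |x 1| ≤ x 0 * Real.tan θ}

/-- The region `P₀`: the disk of radius `l₀` intersected with the cone. -/
def irrP (θ l₀ : ℝ) : Set (EuclideanSpace ℝ (Fin 2)) :=
  {x | ‖x‖ ≤ l₀} ∩ irrCone θ

/-- The arc `Q₀`: the circle of radius `l₀` intersected with the cone. -/
def irrQ (θ l₀ : ℝ) : Set (EuclideanSpace ℝ (Fin 2)) :=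
  {x | ‖x‖ = l₀} ∩ irrCone θ

/-!
The unit tangent of `τ` lifts to an angle `φ` (namely `φ = ∫ τ' × τ''`) with `φ 0 = 0`
and `|φ'| ≤ κ₀`. For a unit vector `e_β`, the derivative of `⟪τ, e_β⟫` is `cos (φ - β)`, so
`⟪τ, e_β⟫` is bounded below by its value along a circular arc of curvature `κ₀`. With `e_β`
the inner normals of the two edges of `K`, this keeps `τ` inside `K` as long as
`κ₀ s ≤ 2θ̄`; with `e_β` the tangent at time `θ̄/κ₀` it gives `‖τ (2θ̄/κ₀)‖ ≥ 2 sin θ̄/κ₀ = l₀`.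
If instead `2θ̄/κ₀ > 1`, then `τ 1 ∈ K \ P₀` lies outside the disk. Either way `‖τ‖` reaches
`l₀` while `τ` is still in `K`, and `s₀` is the first such time.
-/

open Filter Topology
open scoped RealInnerProductSpace

local notation "ℝ²" => EuclideanSpace ℝ (Fin 2)

section Comparison

variable {f g f' g' : ℝ → ℝ} {a b : ℝ}

theorem sub_le_sub_of_hasDerivAt_le (hab : a ≤ b) (hf : ContinuousOn f (Icc a b))
    (hg : ContinuousOn g (Icc a b)) (hf' : ∀ s ∈ Ioo a b, HasDerivAt f (f' s) s)
    (hg' : ∀ s ∈ Ioo a b, HasDerivAt g (g' s) s) (hle : ∀ s ∈ Ioo a b, f' s ≤ g' s) :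
    f b - f a ≤ g b - g a := by
  have hmono : MonotoneOn (fun s => g s - f s) (Icc a b) := by
    refine monotoneOn_of_hasDerivWithinAt_nonneg (f' := fun s => g' s - f' s) (convex_Icc a b)
      (hg.sub hf) (fun s hs => ?_) (fun s hs => ?_) <;> rw [interior_Icc] at *
    · exact ((hg' s hs).sub (hf' s hs)).hasDerivWithinAt
    · exact sub_nonneg.2 (hle s hs)
  linarith [hmono (left_mem_Icc.2 hab) (right_mem_Icc.2 hab) hab]

theorem eqOn_Icc_of_hasDerivAt_zero (hf : ContinuousOn f (Icc a b))
    (hf' : ∀ s ∈ Ioo a b, HasDerivAt f 0 s) : ∀ s ∈ Icc a b, f s = f a := by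
  intro s hs
  have hfs : ContinuousOn f (Icc a s) := hf.mono (Icc_subset_Icc_right hs.2)
  have hfs' : ∀ t ∈ Ioo a s, HasDerivAt f 0 t := fun t ht => hf' t ⟨ht.1, ht.2.trans_le hs.2⟩
  have hconst : ∀ t ∈ Ioo a s, HasDerivAt (fun _ => (0 : ℝ)) 0 t := fun t _ => hasDerivAt_const t 0
  have h₁ := sub_le_sub_of_hasDerivAt_le hs.1 hfs continuousOn_const hfs' hconst fun _ _ => le_rfl
  have h₂ := sub_le_sub_of_hasDerivAt_le hs.1 continuousOn_const hfs hconst hfs' fun _ _ => le_rfl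
  linarith

theorem abs_sub_le_mul_of_abs_hasDerivAt_le {C : ℝ} (hf : ContinuousOn f (Icc a b))
    (hf' : ∀ s ∈ Ioo a b, HasDerivAt f (f' s) s) (hC : ∀ s ∈ Ioo a b, |f' s| ≤ C) :
    ∀ u ∈ Icc a b, ∀ v ∈ Icc a b, |f u - f v| ≤ C * |u - v| := by
  intro u hu v hv
  wlog hvu : v ≤ u generalizing u v
  · rw [abs_sub_comm, abs_sub_comm u]; exact this v hv u hu (le_of_not_ge hvu)
  have hsub : Icc v u ⊆ Icc a b := Icc_subset_Icc hv.1 hu.2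
  have hfvu : ContinuousOn f (Icc v u) := hf.mono hsub
  have hfvu' : ∀ s ∈ Ioo v u, HasDerivAt f (f' s) s :=
    fun s hs => hf' s (Ioo_subset_Ioo hv.1 hu.2 hs)
  have hlin : ∀ s ∈ Ioo v u, ∀ c : ℝ, HasDerivAt (fun t => c * t) c s :=
    fun s _ c => by simpa using (hasDerivAt_id s).const_mul c
  have hle := sub_le_sub_of_hasDerivAt_le hvu hfvu (Continuous.continuousOn (by fun_prop)) hfvu'
    (fun s hs => hlin s hs C) fun s hs => (abs_le.1 (hC s (Ioo_subset_Ioo hv.1 hu.2 hs))).2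
  have hge := sub_le_sub_of_hasDerivAt_le hvu (Continuous.continuousOn (by fun_prop)) hfvu
    (fun s hs => hlin s hs (-C)) hfvu' fun s hs => (abs_le.1 (hC s (Ioo_subset_Ioo hv.1 hu.2 hs))).1
  rw [abs_of_nonneg (sub_nonneg.2 hvu), abs_le]
  constructor <;> linarith

theorem exists_eq_forall_le_of_continuousOn {r : ℝ} (hab : a ≤ b) (hf : ContinuousOn f (Icc a b))
    (ha : f a ≤ r) (hb : r ≤ f b) : ∃ c ∈ Icc a b, f c = r ∧ ∀ s ∈ Icc a c, f s ≤ r := by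
  set K := Icc a b ∩ f ⁻¹' Ici r
  have hK : IsClosed K := hf.preimage_isClosed_of_isClosed isClosed_Icc isClosed_Ici
  have hbK : b ∈ K := ⟨right_mem_Icc.2 hab, hb⟩
  have hKbdd : BddBelow K := ⟨a, fun s hs => hs.1.1⟩
  have hcK : sInf K ∈ K := hK.csInf_mem ⟨b, hbK⟩ hKbdd
  have hbefore : ∀ s ∈ Ico a (sInf K), f s < r := fun s hs => not_le.1 fun hrs =>
    (csInf_le hKbdd ⟨⟨hs.1, hs.2.le.trans hcK.1.2⟩, hrs⟩).not_gt hs.2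
  obtain ⟨t, ht, hft⟩ := intermediate_value_Icc hcK.1.1 (hf.mono (Icc_subset_Icc_right hcK.1.2))
    ⟨ha, hcK.2⟩
  have htc : t = sInf K := le_antisymm ht.2 (csInf_le hKbdd ⟨⟨ht.1, ht.2.trans hcK.1.2⟩, hft.ge⟩)
  refine ⟨sInf K, hcK.1, htc ▸ hft, fun s hs => ?_⟩
  rcases hs.2.lt_or_eq with hlt | rfl
  · exact (hbefore s ⟨hs.1, hlt⟩).le
  · exact htc ▸ hft.le

end Comparison

noncomputable def dir (β : ℝ) : ℝ² := !₂[cos β, sin β]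

def cross (x y : ℝ²) : ℝ := x 0 * y 1 - x 1 * y 0

theorem dir_apply_zero (β : ℝ) : dir β 0 = cos β := rfl

theorem dir_apply_one (β : ℝ) : dir β 1 = sin β := rfl

theorem inner_dir (x : ℝ²) (β : ℝ) : ⟪x, dir β⟫ = x 0 * cos β + x 1 * sin β := by
  simp [dir, PiLp.inner_apply, Fin.sum_univ_two]
  ring

theorem inner_dir_dir (α β : ℝ) : ⟪dir α, dir β⟫ = cos (α - β) := by
  rw [inner_dir, cos_sub, dir_apply_zero, dir_apply_one]

theorem norm_sq_eq_coord (x : ℝ²) : ‖x‖ ^ 2 = x 0 ^ 2 + x 1 ^ 2 := by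
  simp [EuclideanSpace.norm_sq_eq, Fin.sum_univ_two]

theorem norm_dir (β : ℝ) : ‖dir β‖ = 1 := by
  simp [dir, EuclideanSpace.norm_eq]

theorem abs_cross_le (x y : ℝ²) : |cross x y| ≤ ‖x‖ * ‖y‖ := by
  have lagrange : cross x y ^ 2 + ⟪x, y⟫ ^ 2 = (‖x‖ * ‖y‖) ^ 2 := by
    simp only [mul_pow, norm_sq_eq_coord, cross, PiLp.inner_apply, Fin.sum_univ_two,
      RCLike.inner_apply, conj_trivial]
    ring
  exact abs_le_of_sq_le_sq (by nlinarith [sq_nonneg ⟪x, y⟫]) (by positivity)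

theorem HasDerivAt.euclidean_apply {ι : Type*} [Fintype ι] {T : ℝ → EuclideanSpace ℝ ι}
    {T' : EuclideanSpace ℝ ι} {s : ℝ} (h : HasDerivAt T T' s) (i : ι) :
    HasDerivAt (fun t => T t i) (T' i) s :=
  (EuclideanSpace.proj (𝕜 := ℝ) i).hasFDerivAt.comp_hasDerivAt s h

theorem HasDerivAt.inner_self_eq_zero_of_norm_eventually_const {E : Type*}
    [NormedAddCommGroup E] [InnerProductSpace ℝ E] {T : ℝ → E} {T' : E} {s r : ℝ}
    (hT : HasDerivAt T T' s) (hr : ∀ᶠ t in 𝓝 s, ‖T t‖ = r) : ⟪T s, T'⟫ = 0 := by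
  have hconst : HasDerivAt (fun t => ⟪T t, T t⟫) 0 s :=
    (hasDerivAt_const s (r ^ 2)).congr_of_eventuallyEq
      (hr.mono fun t ht => by simp [ht])
  have h := (hT.inner ℝ hT).unique hconst
  rw [real_inner_comm (T s) T'] at h
  linarith

section AngleLift

variable {T T' : ℝ → ℝ²} {a b : ℝ}

theorem eqOn_dir_of_hasDerivAt_cross {φ : ℝ → ℝ} (hT : ContinuousOn T (Icc a b))
    (hT' : ∀ s ∈ Ioo a b, HasDerivAt T (T' s) s) (hunit : ∀ s ∈ Icc a b, ‖T s‖ = 1)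
    (hφ : ContinuousOn φ (Icc a b)) (hφ' : ∀ s ∈ Ioo a b, HasDerivAt φ (cross (T s) (T' s)) s)
    (ha : T a = dir (φ a)) : ∀ s ∈ Icc a b, T s = dir (φ s) := by
  set A : ℝ → ℝ := fun t => T t 0 * cos (φ t) + T t 1 * sin (φ t)
  set B : ℝ → ℝ := fun t => T t 1 * cos (φ t) - T t 0 * sin (φ t)
  have hA : ContinuousOn A (Icc a b) := by fun_prop
  have hB : ContinuousOn B (Icc a b) := by fun_prop
  have hderiv : ∀ s ∈ Ioo a b, HasDerivAt A 0 s ∧ HasDerivAt B 0 s := by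
    intro s hs
    have hnorm : T s 0 ^ 2 + T s 1 ^ 2 = 1 := by
      rw [← norm_sq_eq_coord, hunit s (Ioo_subset_Icc_self hs), one_pow]
    have horth : T s 0 * T' s 0 + T s 1 * T' s 1 = 0 := by
      have h := (hT' s hs).inner_self_eq_zero_of_norm_eventually_const
        (eventually_of_mem (Icc_mem_nhds hs.1 hs.2) hunit)
      simpa [PiLp.inner_apply, Fin.sum_univ_two, mul_comm] using h
    have h₀ := (hT' s hs).euclidean_apply 0
    have h₁ := (hT' s hs).euclidean_apply 1
    have hcos := (hφ' s hs).cos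
    have hsin := (hφ' s hs).sin
    constructor
    · refine ((h₀.mul hcos).add (h₁.mul hsin)).congr_deriv ?_
      simp only [cross]
      linear_combination (cos (φ s) * T s 0 + sin (φ s) * T s 1) * horth -
        (cos (φ s) * T' s 0 + sin (φ s) * T' s 1) * hnorm
    · refine ((h₁.mul hcos).sub (h₀.mul hsin)).congr_deriv ?_
      simp only [cross]
      linear_combination (cos (φ s) * T s 1 - sin (φ s) * T s 0) * horth -
        (cos (φ s) * T' s 1 - sin (φ s) * T' s 0) * hnorm
  have hAa : A a = 1 := by simp [A, ha, dir, ← sq]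
  have hBa : B a = 0 := by simp only [B, ha, dir_apply_zero, dir_apply_one]; ring
  intro s hs
  have hAs := eqOn_Icc_of_hasDerivAt_zero hA (fun t ht => (hderiv t ht).1) s hs
  have hBs := eqOn_Icc_of_hasDerivAt_zero hB (fun t ht => (hderiv t ht).2) s hs
  rw [hAa] at hAs
  rw [hBa] at hBs
  have hpy := sin_sq_add_cos_sq (φ s)
  simp only [A, B] at hAs hBs
  ext i
  fin_cases i
  · show T s 0 = cos (φ s)
    linear_combination cos (φ s) * hAs - sin (φ s) * hBs - T s 0 * hpy
  · show T s 1 = sin (φ s)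
    linear_combination sin (φ s) * hAs + cos (φ s) * hBs - T s 1 * hpy

theorem exists_angle_lift {κ α : ℝ} (hab : a ≤ b) (hT : ContinuousOn T (Icc a b))
    (hT'c : ContinuousOn T' (Icc a b)) (hT' : ∀ s ∈ Ioo a b, HasDerivAt T (T' s) s)
    (hunit : ∀ s ∈ Icc a b, ‖T s‖ = 1) (hbound : ∀ s ∈ Ioo a b, ‖T' s‖ ≤ κ) (ha : T a = dir α) :
    ∃ φ : ℝ → ℝ, φ a = α ∧ (∀ s ∈ Icc a b, T s = dir (φ s)) ∧
      ∀ u ∈ Icc a b, ∀ v ∈ Icc a b, |φ u - φ v| ≤ κ * |u - v| := by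
  set c : ℝ → ℝ := fun t => cross (T t) (T' t)
  have hc : ContinuousOn c (Icc a b) := by simp only [c, cross]; fun_prop
  set φ : ℝ → ℝ := fun s => α + ∫ t in a..s, c t
  have hφ : ContinuousOn φ (Icc a b) := by
    have h := intervalIntegral.continuousOn_primitive_interval (μ := MeasureTheory.volume)
      (a := a) (b := b) (by rw [uIcc_of_le hab]; exact hc.integrableOn_Icc)
    rw [uIcc_of_le hab] at h
    exact continuousOn_const.add h
  have hφ' : ∀ s ∈ Ioo a b, HasDerivAt φ (c s) s := by
    intro s hs
    refine (intervalIntegral.integral_hasDerivAt_right ?_ ?_ ?_).const_add α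
    · exact (hc.mono (Icc_subset_Icc_right hs.2.le)).intervalIntegrable_of_Icc hs.1.le
    · exact (hc.mono Ioo_subset_Icc_self).stronglyMeasurableAtFilter isOpen_Ioo s hs
    · exact hc.continuousAt (Icc_mem_nhds hs.1 hs.2)
  have hcκ : ∀ s ∈ Ioo a b, |c s| ≤ κ := fun s hs =>
    calc |c s| ≤ ‖T s‖ * ‖T' s‖ := abs_cross_le _ _
      _ ≤ κ := by rw [hunit s (Ioo_subset_Icc_self hs), one_mul]; exact hbound s hs
  have hφa : φ a = α := by simp [φ]
  refine ⟨φ, hφa, eqOn_dir_of_hasDerivAt_cross hT hT' hunit hφ hφ' (hφa ▸ ha), ?_⟩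
  exact abs_sub_le_mul_of_abs_hasDerivAt_le hφ hφ' hcκ

end AngleLift

section Geometry

variable {τ : ℝ → ℝ²} {φ : ℝ → ℝ} {κ : ℝ}

theorem sin_sub_sin_div_le_inner_dir {a b c β : ℝ} (hκ : 0 < κ) (hab : a ≤ b)
    (hτ : ContinuousOn τ (Icc a b)) (hτ' : ∀ s ∈ Ioo a b, HasDerivAt τ (dir (φ s)) s)
    (hφ : ∀ s ∈ Ioo a b, |φ s - β| ≤ |κ * s + c|) (hπ : ∀ s ∈ Ioo a b, |κ * s + c| ≤ π) :
    (sin (κ * b + c) - sin (κ * a + c)) / κ ≤ ⟪τ b - τ a, dir β⟫ := by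
  have hlower : ∀ s, HasDerivAt (fun t => sin (κ * t + c) / κ) (cos (κ * s + c)) s := fun s => by
    have h := (((hasDerivAt_id s).const_mul κ).add_const c).sin.div_const κ
    refine h.congr_deriv ?_
    field_simp
    rfl
  have hinner : ∀ s ∈ Ioo a b, HasDerivAt (fun t => ⟪τ t, dir β⟫) (cos (φ s - β)) s :=
    fun s hs => by
      simpa [inner_dir_dir] using (hτ' s hs).inner ℝ (hasDerivAt_const s (dir β))
  have hcmp := sub_le_sub_of_hasDerivAt_le hab (Continuous.continuousOn (by fun_prop))
    (hτ.inner continuousOn_const) (fun s _ => hlower s) hinner fun s hs => by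
      rw [← cos_abs (κ * s + c), ← cos_abs (φ s - β)]
      exact cos_le_cos_of_nonneg_of_le_pi (abs_nonneg _) (hπ s hs) (hφ s hs)
  rw [inner_sub_left, sub_div]
  exact hcmp

theorem mem_irrCone_of_inner_dir_nonneg {θ : ℝ} {x : ℝ²} (hθ : 0 < cos θ)
    (h₁ : 0 ≤ ⟪x, dir (θ - π / 2)⟫) (h₂ : 0 ≤ ⟪x, dir (π / 2 - θ)⟫) : x ∈ irrCone θ := by
  rw [inner_dir, cos_sub_pi_div_two, sin_sub_pi_div_two] at h₁
  rw [inner_dir, cos_pi_div_two_sub, sin_pi_div_two_sub] at h₂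
  show |x 1| ≤ x 0 * tan θ
  rw [tan_eq_sin_div_cos, ← mul_div_assoc, le_div_iff₀ hθ, ← abs_of_pos hθ, ← abs_mul, abs_le]
  constructor <;> linarith

theorem mem_irrCone_of_abs_angle_le {θ S : ℝ} (hθ₀ : 0 < θ) (hθ₁ : θ < π / 2) (hκ : 0 < κ)
    (hτ : ContinuousOn τ (Icc 0 S)) (hτ' : ∀ s ∈ Ioo 0 S, HasDerivAt τ (dir (φ s)) s)
    (h0 : τ 0 = 0) (hφ : ∀ s ∈ Icc 0 S, |φ s| ≤ κ * s) (hS : κ * S ≤ 2 * θ) :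
    ∀ s ∈ Icc 0 S, τ s ∈ irrCone θ := by
  have hκs : ∀ s ∈ Icc 0 S, 0 ≤ κ * s ∧ κ * s ≤ 2 * θ := fun s hs =>
    ⟨mul_nonneg hκ.le hs.1, (mul_le_mul_of_nonneg_left hs.2 hκ.le).trans hS⟩
  intro s hs
  have hside : ∀ β, |β| = π / 2 - θ → 0 ≤ ⟪τ s, dir β⟫ := by
    intro β hβ
    have hsub : Ioo 0 s ⊆ Ioo 0 S := Ioo_subset_Ioo_right hs.2
    have hpos : ∀ t ∈ Ioo 0 s, |κ * t + (π / 2 - θ)| = κ * t + (π / 2 - θ) := fun t ht =>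
      abs_of_nonneg (by linarith [(hκs t (Ioo_subset_Icc_self (hsub ht))).1])
    have hbound := sin_sub_sin_div_le_inner_dir (c := π / 2 - θ) (β := β) hκ hs.1
      (hτ.mono (Icc_subset_Icc_right hs.2)) (fun t ht => hτ' t (hsub ht))
      (fun t ht => by
        rw [hpos t ht]
        linarith [abs_sub (φ t) β, hφ t (Ioo_subset_Icc_self (hsub ht))])
      (fun t ht => by
        rw [hpos t ht]
        linarith [(hκs t (Ioo_subset_Icc_self (hsub ht))).2])
    rw [h0, sub_zero, mul_zero, zero_add] at hbound
    refine le_trans (div_nonneg ?_ hκ.le) hbound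
    rw [show κ * s + (π / 2 - θ) = π / 2 - (θ - κ * s) by ring, sin_pi_div_two_sub,
      sin_pi_div_two_sub, sub_nonneg, ← cos_abs (θ - κ * s)]
    refine cos_le_cos_of_nonneg_of_le_pi (abs_nonneg _) (by linarith [pi_pos]) ?_
    rw [abs_le]
    constructor <;> linarith [hκs s hs]
  refine mem_irrCone_of_inner_dir_nonneg (cos_pos_of_mem_Ioo ⟨by linarith, hθ₁⟩)
    (hside _ ?_) (hside _ ?_)
  · rw [abs_of_neg (by linarith)]; ring
  · rw [abs_of_pos (by linarith)]

theorem two_mul_sin_div_le_norm {θ : ℝ} (hθ₀ : 0 ≤ θ) (hθ₁ : θ ≤ π) (hκ : 0 < κ)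
    (hτ : ContinuousOn τ (Icc 0 (2 * θ / κ)))
    (hτ' : ∀ s ∈ Ioo 0 (2 * θ / κ), HasDerivAt τ (dir (φ s)) s) (h0 : τ 0 = 0)
    (hφ : ∀ u ∈ Icc 0 (2 * θ / κ), ∀ v ∈ Icc 0 (2 * θ / κ), |φ u - φ v| ≤ κ * |u - v|) :
    2 * sin θ / κ ≤ ‖τ (2 * θ / κ)‖ := by
  set S := 2 * θ / κ
  have hκS : κ * S = 2 * θ := mul_div_cancel₀ _ hκ.ne'
  have hm : θ / κ ∈ Icc 0 S :=
    ⟨by positivity, div_le_div_of_nonneg_right (by linarith) hκ.le⟩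
  have hbound := sin_sub_sin_div_le_inner_dir (c := -θ) (β := φ (θ / κ)) hκ (by positivity) hτ hτ'
    (fun s hs => by
      calc |φ s - φ (θ / κ)| ≤ κ * |s - θ / κ| := hφ s (Ioo_subset_Icc_self hs) _ hm
        _ = |κ * s + -θ| := by
          rw [show κ * s + -θ = κ * (s - θ / κ) by field_simp; ring, abs_mul, abs_of_pos hκ])
    (fun s hs => by
      have hκs : κ * s ≤ κ * S := mul_le_mul_of_nonneg_left hs.2.le hκ.le
      rw [abs_le]
      constructor <;> nlinarith [hs.1])
  rw [hκS, h0, sub_zero, mul_zero, zero_add, show 2 * θ + -θ = θ by ring, sin_neg,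
    sub_neg_eq_add, ← two_mul] at hbound
  calc 2 * sin θ / κ ≤ ⟪τ S, dir (φ (θ / κ))⟫ := hbound
    _ ≤ ‖τ S‖ * ‖dir (φ (θ / κ))‖ := real_inner_le_norm _ _
    _ = ‖τ S‖ := by rw [norm_dir, mul_one]

end Geometry

section Regularity

variable {E : Type*} [NormedAddCommGroup E] [NormedSpace ℝ E] {a b : ℝ}

theorem ContDiffOn.contDiffOn_deriv_of_differentiableAt {f : ℝ → E} (hab : a < b)
    (hf : ContDiffOn ℝ 2 f (Icc a b)) (hdiff : ∀ s ∈ Icc a b, DifferentiableAt ℝ f s) :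
    ContDiffOn ℝ 1 (deriv f) (Icc a b) :=
  (hf.derivWithin (uniqueDiffOn_Icc hab) (by norm_num)).congr fun s hs =>
    ((hdiff s hs).derivWithin (uniqueDiffOn_Icc hab s hs)).symm

theorem ContDiffOn.hasDerivAt_derivWithin_Icc {g : ℝ → E} (hg : ContDiffOn ℝ 1 g (Icc a b))
    {s : ℝ} (hs : s ∈ Ioo a b) : HasDerivAt g (derivWithin g (Icc a b) s) s := by
  have hnhds := Icc_mem_nhds hs.1 hs.2
  rw [derivWithin_of_mem_nhds hnhds]
  exact ((hg.differentiableOn one_ne_zero s (Ioo_subset_Icc_self hs)).differentiableAt hnhds).hasDerivAt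

end Regularity

theorem exists_angle_of_contDiffOn_two {τ : ℝ → ℝ²} {a b κ α : ℝ} (hab : a < b)
    (hτ : ContDiffOn ℝ 2 τ (Icc a b)) (hunit : ∀ s ∈ Icc a b, ‖deriv τ s‖ = 1)
    (hcurv : ∀ s ∈ Ioo a b, ‖deriv (deriv τ) s‖ ≤ κ) (ha : deriv τ a = dir α) :
    ∃ φ : ℝ → ℝ, φ a = α ∧ (∀ s ∈ Ioo a b, HasDerivAt τ (dir (φ s)) s) ∧
      ∀ u ∈ Icc a b, ∀ v ∈ Icc a b, |φ u - φ v| ≤ κ * |u - v| := by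
  have hdiff : ∀ s ∈ Icc a b, DifferentiableAt ℝ τ s := fun s hs =>
    differentiableAt_of_deriv_ne_zero (norm_ne_zero_iff.1 (by rw [hunit s hs]; exact one_ne_zero))
  have hT := hτ.contDiffOn_deriv_of_differentiableAt hab hdiff
  obtain ⟨φ, hφa, hTφ, hφ⟩ := exists_angle_lift hab.le hT.continuousOn
    (hT.continuousOn_derivWithin (uniqueDiffOn_Icc hab) le_rfl)
    (fun s hs => hT.hasDerivAt_derivWithin_Icc hs) hunit
    (fun s hs => by rw [derivWithin_of_mem_nhds (Icc_mem_nhds hs.1 hs.2)]; exact hcurv s hs) ha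
  refine ⟨φ, hφa, fun s hs => ?_, hφ⟩
  rw [← hTφ s (Ioo_subset_Icc_self hs)]
  exact (hdiff s (Ioo_subset_Icc_self hs)).hasDerivAt

theorem exists_mem_irrQ_of_angle_lipschitz {τ : ℝ → ℝ²} {φ : ℝ → ℝ} {θ l₀ : ℝ} (hθ₀ : 0 < θ)
    (hθ₁ : θ < π / 2) (hl₀ : 0 < l₀) (hτ : ContinuousOn τ (Icc 0 1))
    (hτ' : ∀ s ∈ Ioo 0 1, HasDerivAt τ (dir (φ s)) s) (h0 : τ 0 = 0) (hφ0 : φ 0 = 0)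
    (hφ : ∀ u ∈ Icc 0 1, ∀ v ∈ Icc 0 1, |φ u - φ v| ≤ 2 * sin θ / l₀ * |u - v|)
    (hend : τ 1 ∉ irrP θ l₀) :
    ∃ s₀ ∈ Icc 0 1, τ s₀ ∈ irrQ θ l₀ ∧ ∀ s ∈ Icc 0 s₀, τ s ∈ irrP θ l₀ := by
  set κ := 2 * sin θ / l₀
  have hsin : 0 < 2 * sin θ := mul_pos two_pos (sin_pos_of_pos_of_lt_pi hθ₀ (by linarith))
  have hκ : 0 < κ := div_pos hsin hl₀
  have hcone : ∀ S ∈ Icc (0:ℝ) 1, κ * S ≤ 2 * θ → ∀ s ∈ Icc 0 S, τ s ∈ irrCone θ :=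
    fun S hS hκS => mem_irrCone_of_abs_angle_le hθ₀ hθ₁ hκ (hτ.mono (Icc_subset_Icc_right hS.2))
      (fun s hs => hτ' s (Ioo_subset_Ioo_right hS.2 hs)) h0
      (fun s hs => by
        simpa [hφ0, abs_of_nonneg hs.1] using
          hφ s (Icc_subset_Icc_right hS.2 hs) 0 (left_mem_Icc.2 zero_le_one)) hκS
  obtain ⟨S, hS, hκS, hfar⟩ : ∃ S ∈ Icc (0:ℝ) 1, κ * S ≤ 2 * θ ∧ l₀ ≤ ‖τ S‖ := by
    rcases le_or_gt (2 * θ / κ) 1 with h | h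
    · have hS : Icc 0 (2 * θ / κ) ⊆ Icc 0 1 := Icc_subset_Icc_right h
      refine ⟨2 * θ / κ, ⟨by positivity, h⟩, (mul_div_cancel₀ _ hκ.ne').le, ?_⟩
      calc l₀ = 2 * sin θ / κ := (div_div_cancel₀ hsin.ne').symm
        _ ≤ ‖τ (2 * θ / κ)‖ := two_mul_sin_div_le_norm hθ₀.le (by linarith) hκ (hτ.mono hS)
          (fun s hs => hτ' s (Ioo_subset_Ioo_right h hs)) h0
          fun u hu v hv => hφ u (hS hu) v (hS hv)
    · have hκ1 : κ * 1 ≤ 2 * θ := by linarith [(lt_div_iff₀ hκ).1 h]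
      refine ⟨1, right_mem_Icc.2 zero_le_one, hκ1, not_lt.1 fun hlt => hend ?_⟩
      exact ⟨hlt.le, hcone 1 (right_mem_Icc.2 zero_le_one) hκ1 1 (right_mem_Icc.2 zero_le_one)⟩
  obtain ⟨s₀, hs₀, hnorm, hinside⟩ := exists_eq_forall_le_of_continuousOn hS.1
    (hτ.mono (Icc_subset_Icc_right hS.2)).norm (by rw [h0, norm_zero]; exact hl₀.le) hfar
  exact ⟨s₀, Icc_subset_Icc_right hS.2 hs₀, ⟨hnorm, hcone S hS hκS s₀ hs₀⟩,
    fun s hs => ⟨hinside s hs, hcone S hS hκS s (Icc_subset_Icc_right hs₀.2 hs)⟩⟩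

/-- Theorem (escape through the arc): any unit-speed C² curve starting at the
origin in direction `(1,0)`, with curvature bounded by `κ₀ = 2 sin θ̄ / l₀`,
which ends outside `P₀`, must cross the arc `Q₀`, staying in `P₀` until then. -/
theorem curvature_constrained_path_leaves_through_arc
    (θ l₀ : ℝ) (hθ₀ : 0 < θ) (hθ₁ : θ < π / 2) (hl₀ : 0 < l₀)
    (τ : ℝ → EuclideanSpace ℝ (Fin 2))
    (hC2 : ContDiffOn ℝ 2 τ (Icc 0 1))
    (h0 : τ 0 = !₂[0, 0])
    (h0' : deriv τ 0 = !₂[1, 0])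
    (hunit : ∀ s ∈ Icc (0:ℝ) 1, ‖deriv τ s‖ = 1)
    (hcurv : ∀ s ∈ Icc (0:ℝ) 1, ‖deriv (deriv τ) s‖ ≤ 2 * Real.sin θ / l₀)
    (hend : τ 1 ∉ irrP θ l₀) :
    ∃ s₀ ∈ Icc (0:ℝ) 1, τ s₀ ∈ irrQ θ l₀ ∧ ∀ s ∈ Icc 0 s₀, τ s ∈ irrP θ l₀ := by
  obtain ⟨φ, hφ0, hτ', hφ⟩ := exists_angle_of_contDiffOn_two zero_lt_one hC2 hunit
    (fun s hs => hcurv s (Ioo_subset_Icc_self hs)) (α := 0)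
    (by rw [h0']; ext i; fin_cases i <;> simp [dir])
  have hτ0 : τ 0 = 0 := by rw [h0]; ext i; fin_cases i <;> simp
  exact exists_mem_irrQ_of_angle_lipschitz hθ₀ hθ₁ hl₀ hC2.continuousOn hτ' hτ0 hφ0 hφ hend
end

section
/- For every θ̄ with 0 < θ̄ ≤ π/2 and every natural number N ≥ 2, one has 2 · arctan( sin(θ̄) / √(N² − sin²(θ̄)) ) ≤ θ̄. -/
open Real

/-- Joint-limit bound: for `N ≥ 2`, twice the joint angle
`θᵢ(N) = arctan (sin θ̄ / √(N² − sin² θ̄))` does not exceed `θ̄`. -/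
theorem double_joint_angle_le_limit
    (θ : ℝ) (hθ₀ : 0 < θ) (hθ₁ : θ ≤ π / 2) (N : ℕ) (hN : 2 ≤ N) :
    2 * Real.arctan (Real.sin θ / Real.sqrt ((N : ℝ) ^ 2 - Real.sin θ ^ 2)) ≤ θ := by
  have hNR : (2 : ℝ) ≤ (N : ℝ) := by exact_mod_cast hN
  have hs1 : Real.sin θ ^ 2 ≤ 1 := Real.sin_sq_le_one θ
  have hA : (0:ℝ) < (N : ℝ) ^ 2 - Real.sin θ ^ 2 := by nlinarith
  have hspos : 0 < Real.sqrt ((N : ℝ) ^ 2 - Real.sin θ ^ 2) := Real.sqrt_pos.mpr hA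
  set s := Real.sqrt ((N : ℝ) ^ 2 - Real.sin θ ^ 2) with hs
  have hcos : Real.cos θ ≤ 1 := Real.cos_le_one θ
  have hkey : 1 + Real.cos θ ≤ s := by
    have h1 : (1 + Real.cos θ) ^ 2 ≤ (N : ℝ) ^ 2 - Real.sin θ ^ 2 := by
      nlinarith [Real.sin_sq_add_cos_sq θ]
    calc 1 + Real.cos θ = Real.sqrt ((1 + Real.cos θ) ^ 2) :=
          (Real.sqrt_sq (by nlinarith [Real.neg_one_le_cos θ])).symm
      _ ≤ s := Real.sqrt_le_sqrt h1
  -- half-angle facts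
  have hhalf₀ : 0 < θ / 2 := by linarith
  have hhalf₁ : θ / 2 ≤ π / 4 := by linarith
  have hhlt : θ / 2 < π / 2 := by
    have := Real.pi_pos; linarith
  have hcoshalf : 0 < Real.cos (θ / 2) :=
    Real.cos_pos_of_mem_Ioo ⟨by linarith, hhlt⟩
  have hsinhalf : 0 < Real.sin (θ / 2) :=
    Real.sin_pos_of_pos_of_lt_pi hhalf₀ (by have := Real.pi_pos; linarith)
  have hsin2 : Real.sin θ = 2 * Real.sin (θ / 2) * Real.cos (θ / 2) := by
    have := Real.sin_two_mul (θ / 2)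
    rw [show 2 * (θ / 2) = θ by ring] at this
    linarith
  have hcos2 : Real.cos θ = 2 * Real.cos (θ / 2) ^ 2 - 1 := by
    have := Real.cos_two_mul (θ / 2)
    rw [show 2 * (θ / 2) = θ by ring] at this
    linarith
  have hle : Real.sin θ / s ≤ Real.tan (θ / 2) := by
    rw [Real.tan_eq_sin_div_cos, div_le_div_iff₀ hspos hcoshalf]
    have : Real.sin θ * Real.cos (θ / 2) = Real.sin (θ / 2) * (1 + Real.cos θ) := by
      rw [hsin2, hcos2]; ring
    rw [this]
    exact mul_le_mul_of_nonneg_left hkey hsinhalf.le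
  have harctan : Real.arctan (Real.sin θ / s) ≤ θ / 2 := by
    calc Real.arctan (Real.sin θ / s) ≤ Real.arctan (Real.tan (θ / 2)) :=
          Real.arctan_strictMono.monotone hle
      _ = θ / 2 := Real.arctan_tan (by linarith) hhlt
  linarith
end
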